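/- Let H be a nonempty axis-aligned region in ℝ^{n₁}×⋯×ℝ^{n_k} and let M : ℝ^{n₁}×⋯×ℝ^{n_k} → ℝ be multilinear. Then for every x ∈ H, the point (x, M(x)) lies in the convex hull of the finite set {(v, M(v)) : v ∈ corner(H)}. -/

import Mathlib

/-- `M` is multilinear in the block variables: fixing all blocks except the `j`-th yields an
affine map `ℝ^{n_j} → ℝ`. -/
def IsBlockMultilinear {k : ℕ} {n : Fin k → ℕ}
    (M : ((j : Fin k) → (Fin (n j) → ℝ)) → ℝ) : Prop :=
  ∀ (j : Fin k) (x : (j : Fin k) → Fin (n j) → ℝ),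
    ∃ A : (Fin (n j) → ℝ) →ᵃ[ℝ] ℝ, ∀ y : Fin (n j) → ℝ, M (Function.update x j y) = A y

/-- An axis-aligned region in `ℝ^{n₁} × ⋯ × ℝ^{n_k}`: a finite union of products of
polytopes (convex hulls of nonempty finite sets), one polytope per block. -/
def IsBlockAxisAligned {k : ℕ} {n : Fin k → ℕ}
    (H : Set ((j : Fin k) → Fin (n j) → ℝ)) : Prop :=
  ∃ (N : ℕ) (V : Fin N → (j : Fin k) → Finset (Fin (n j) → ℝ)),
    (∀ i j, (V i j).Nonempty) ∧
    H = ⋃ i : Fin N, {x | ∀ j, x j ∈ convexHull ℝ ((V i j : Set (Fin (n j) → ℝ)))}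

/-- The corner points of a region `H`: points of `H` each of whose block coordinates is an
extreme point of the convex hull of the corresponding slice of `H`. -/
def blockCornerSet {k : ℕ} {n : Fin k → ℕ}
    (H : Set ((j : Fin k) → Fin (n j) → ℝ)) : Set ((j : Fin k) → Fin (n j) → ℝ) :=
  {v | v ∈ H ∧ ∀ j, v j ∈ Set.extremePoints ℝ
    (convexHull ℝ {y : Fin (n j) → ℝ | Function.update v j y ∈ H})}

/-!
Let `V i j` be the vertex sets of the boxes making up `H`, and call a point of `H` a grid point
if each block `j` is a vertex in some `V i j`; there are finitely many. Moving one block of a point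
of a box through the polytope `conv (V i j)` moves `(x, M x)` along an affine image of that
polytope, so replacing the blocks one at a time puts `(x, M x)` into the convex hull `P` of the
graph over grid points. In the same way, `P` contains the graph of `M` over the hull of every
slice through a grid point. Hence if `(g, M g)` is an extreme point of `P`, each block `g j` is
an extreme point of the hull of its slice, i.e. `g` is a corner point. Finally `P`, the hull of
a finite set, is the hull of its extreme points.
-/

open Function Set

section UpdateAffineMap

variable {𝕜 ι : Type*} [Ring 𝕜] [DecidableEq ι] {E : ι → Type*} [∀ i, AddCommGroup (E i)]
  [∀ i, Module 𝕜 (E i)]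

def updateAffineMap (x : ∀ i, E i) (j : ι) : E j →ᵃ[𝕜] ∀ i, E i where
  toFun := update x j
  linear := LinearMap.single 𝕜 E j
  map_vadd' p v := by
    ext i
    by_cases h : i = j
    · subst h; simp
    · simp [h]

@[simp]
theorem coe_updateAffineMap (x : ∀ i, E i) (j : ι) :
    ⇑(updateAffineMap (𝕜 := 𝕜) x j) = update x j :=
  rfl

theorem exists_affineMap_eq_graph_update {M : (∀ i, E i) → 𝕜}
    (hM : ∀ j x, ∃ A : E j →ᵃ[𝕜] 𝕜, ∀ y, M (update x j y) = A y) (x : ∀ i, E i) (j : ι) :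
    ∃ F : E j →ᵃ[𝕜] (∀ i, E i) × 𝕜, ⇑F = fun y => (update x j y, M (update x j y)) := by
  obtain ⟨A, hA⟩ := hM j x
  exact ⟨(updateAffineMap x j).prod A, funext fun y => by simp [hA]⟩

end UpdateAffineMap

section ExtremePoints

variable {𝕜 E F : Type*} [Ring 𝕜] [PartialOrder 𝕜] [AddRightMono 𝕜] [AddCommGroup E] [Module 𝕜 E]
  [AddCommGroup F] [Module 𝕜 F]

theorem AffineMap.mem_extremePoints_of_mapsTo {f : E →ᵃ[𝕜] F} (hf : Injective f) {A : Set E}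
    {B : Set F} (hAB : MapsTo f A B) {x : E} (hx : x ∈ A)
    (hfx : f x ∈ B.extremePoints 𝕜) : x ∈ A.extremePoints 𝕜 := by
  refine ⟨hx, fun a ha b hb hab => ?_⟩
  have hfab : f x ∈ openSegment 𝕜 (f a) (f b) := by
    rw [← image_openSegment]
    exact mem_image_of_mem f hab
  exact hf (hfx.2 (hAB ha) (hAB hb) hfab)

end ExtremePoints

theorem Set.Finite.convexHull_extremePoints_convexHull {E : Type*} [AddCommGroup E]
    [Module ℝ E] [TopologicalSpace E] [T2Space E] [IsTopologicalAddGroup E]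
    [ContinuousSMul ℝ E] [LocallyConvexSpace ℝ E] {s : Set E} (hs : s.Finite) :
    convexHull ℝ ((convexHull ℝ s).extremePoints ℝ) = convexHull ℝ s := by
  have hclosed : IsClosed (convexHull ℝ ((convexHull ℝ s).extremePoints ℝ)) :=
    (hs.subset extremePoints_convexHull_subset).isClosed_convexHull (𝕜 := ℝ)
  rw [← hclosed.closure_eq]
  exact closure_convexHull_extremePoints (hs.isCompact_convexHull ℝ) (convex_convexHull ℝ s)

section UnionPiConvexHull

variable {𝕜 ι κ : Type*} [Semiring 𝕜] [PartialOrder 𝕜] {E : ι → Type*}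
  [∀ i, AddCommMonoid (E i)] [∀ i, Module 𝕜 (E i)]

variable (𝕜) in
def unionPiConvexHull (V : κ → ∀ j, Set (E j)) : Set (∀ j, E j) :=
  ⋃ i, {x | ∀ j, x j ∈ convexHull 𝕜 (V i j)}

variable {V : κ → ∀ j, Set (E j)}

theorem mem_unionPiConvexHull {x : ∀ i, E i} :
    x ∈ unionPiConvexHull 𝕜 V ↔ ∃ i, ∀ j, x j ∈ convexHull 𝕜 (V i j) :=
  mem_iUnion

end UnionPiConvexHull

section Graph

variable {𝕜 ι κ : Type*} [Field 𝕜] [LinearOrder 𝕜] [DecidableEq ι]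
  {E : ι → Type*} [∀ i, AddCommGroup (E i)] [∀ i, Module 𝕜 (E i)] {M : (∀ i, E i) → 𝕜}
  {V : κ → ∀ j, Set (E j)}

theorem graph_update_mem_of_convex
    (hM : ∀ j x, ∃ A : E j →ᵃ[𝕜] 𝕜, ∀ y, M (update x j y) = A y) {C : Set ((∀ i, E i) × 𝕜)}
    (hC : Convex 𝕜 C) {x : ∀ i, E i} {j : ι} {s : Set (E j)}
    (hs : ∀ z ∈ s, (update x j z, M (update x j z)) ∈ C) {y : E j}
    (hy : y ∈ convexHull 𝕜 s) : (update x j y, M (update x j y)) ∈ C := by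
  obtain ⟨F, hF⟩ := exists_affineMap_eq_graph_update hM x j
  have hFy : F y ∈ convexHull 𝕜 (F '' s) := F.image_convexHull s ▸ mem_image_of_mem F hy
  rw [hF] at hFy
  exact convexHull_min (image_subset_iff.2 hs) hC hFy

theorem convexHull_slice_unionPiConvexHull (x : ∀ i, E i) (j : ι) :
    convexHull 𝕜 {y | update x j y ∈ unionPiConvexHull 𝕜 V} =
      convexHull 𝕜 ({y | update x j y ∈ unionPiConvexHull 𝕜 V} ∩ ⋃ i, V i j) := by
  refine (convexHull_min (fun y hy => ?_) (convex_convexHull 𝕜 _)).antisymm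
    (convexHull_mono inter_subset_left)
  obtain ⟨i, hi⟩ := mem_unionPiConvexHull.1 hy
  have hVi : V i j ⊆ {y | update x j y ∈ unionPiConvexHull 𝕜 V} ∩ ⋃ i, V i j := by
    refine fun w hw => ⟨mem_unionPiConvexHull.2 ⟨i, fun j' => ?_⟩, mem_iUnion.2 ⟨i, hw⟩⟩
    rcases eq_or_ne j' j with rfl | h
    · simpa using subset_convexHull 𝕜 _ hw
    · simpa [h] using hi j'
  exact convexHull_mono hVi (by simpa using hi j)

theorem graph_mem_convexHull_graph_pi [Fintype ι]
    (hM : ∀ j x, ∃ A : E j →ᵃ[𝕜] 𝕜, ∀ y, M (update x j y) = A y) {V : ∀ j, Set (E j)}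
    {x : ∀ i, E i} (hx : ∀ j, x j ∈ convexHull 𝕜 (V j)) :
    (x, M x) ∈ convexHull 𝕜 ((fun v => (v, M v)) '' univ.pi V) := by
  suffices h : ∀ s : Finset ι, ∀ x : ∀ i, E i, (∀ j, x j ∈ convexHull 𝕜 (V j)) →
      (∀ j ∉ s, x j ∈ V j) → (x, M x) ∈ convexHull 𝕜 ((fun v => (v, M v)) '' univ.pi V) from
    h Finset.univ x hx fun j hj => absurd (Finset.mem_univ j) hj
  intro s
  induction s using Finset.induction_on with
  | empty => exact fun x _ hV => subset_convexHull 𝕜 _ ⟨x, fun j _ => hV j (by simp), rfl⟩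
  | insert a s _ ih =>
    intro x hx hV
    rw [← update_eq_self a x]
    refine graph_update_mem_of_convex hM (convex_convexHull 𝕜 _) (fun z hz => ?_) (hx a)
    refine ih _ (fun j => ?_) (fun j hj => ?_)
    · rcases eq_or_ne j a with rfl | h
      · simpa using subset_convexHull 𝕜 _ hz
      · simpa [h] using hx j
    · rcases eq_or_ne j a with rfl | h
      · simpa using hz
      · simpa [h] using hV j (by simp [h, hj])

theorem graph_mem_convexHull_graph_grid [Fintype ι]
    (hM : ∀ j x, ∃ A : E j →ᵃ[𝕜] 𝕜, ∀ y, M (update x j y) = A y) {x : ∀ i, E i}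
    (hx : x ∈ unionPiConvexHull 𝕜 V) :
    (x, M x) ∈ convexHull 𝕜 ((fun v => (v, M v)) ''
      (unionPiConvexHull 𝕜 V ∩ univ.pi fun j => ⋃ i, V i j)) := by
  obtain ⟨i, hi⟩ := mem_unionPiConvexHull.1 hx
  have hbox : univ.pi (V i) ⊆ unionPiConvexHull 𝕜 V ∩ univ.pi fun j => ⋃ i, V i j := fun v hv =>
    ⟨mem_unionPiConvexHull.2 ⟨i, fun j => subset_convexHull 𝕜 _ (hv j (mem_univ j))⟩,
      fun j _ => mem_iUnion.2 ⟨i, hv j (mem_univ j)⟩⟩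
  exact convexHull_mono (image_mono hbox) (graph_mem_convexHull_graph_pi hM hi)

theorem graph_update_mem_convexHull_graph_grid
    (hM : ∀ j x, ∃ A : E j →ᵃ[𝕜] 𝕜, ∀ y, M (update x j y) = A y) {g : ∀ i, E i}
    (hg : g ∈ unionPiConvexHull 𝕜 V ∩ univ.pi fun j => ⋃ i, V i j) {j : ι} {y : E j}
    (hy : y ∈ convexHull 𝕜 {y | update g j y ∈ unionPiConvexHull 𝕜 V}) :
    (update g j y, M (update g j y)) ∈ convexHull 𝕜 ((fun v => (v, M v)) ''
      (unionPiConvexHull 𝕜 V ∩ univ.pi fun j => ⋃ i, V i j)) := by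
  rw [convexHull_slice_unionPiConvexHull] at hy
  refine graph_update_mem_of_convex hM (convex_convexHull 𝕜 _) (fun z hz => ?_) hy
  refine subset_convexHull 𝕜 _ ⟨_, ⟨hz.1, ?_⟩, rfl⟩
  exact (update_mem_pi_iff_of_mem hg.2).2 fun _ => hz.2

variable [IsStrictOrderedRing 𝕜]

theorem extremePoints_convexHull_graph_grid_subset
    (hM : ∀ j x, ∃ A : E j →ᵃ[𝕜] 𝕜, ∀ y, M (update x j y) = A y) :
    (convexHull 𝕜 ((fun v => (v, M v)) ''
        (unionPiConvexHull 𝕜 V ∩ univ.pi fun j => ⋃ i, V i j))).extremePoints 𝕜 ⊆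
      (fun v => (v, M v)) '' {v | v ∈ unionPiConvexHull 𝕜 V ∧ ∀ j,
        v j ∈ (convexHull 𝕜 {y | update v j y ∈ unionPiConvexHull 𝕜 V}).extremePoints 𝕜} := by
  intro p hp
  obtain ⟨g, hg, rfl⟩ := extremePoints_convexHull_subset hp
  refine ⟨g, ⟨hg.1, fun j => ?_⟩, rfl⟩
  obtain ⟨F, hF⟩ := exists_affineMap_eq_graph_update hM g j
  have hinj : Injective F := fun a b hab => update_injective g j (congrArg Prod.fst
    (by simpa only [hF] using hab))
  have hFg : F (g j) = (g, M g) := by simp [hF]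
  beta_reduce at hp
  rw [← hFg] at hp
  refine F.mem_extremePoints_of_mapsTo hinj (fun y hy => ?_) ?_ hp
  · simpa only [hF] using graph_update_mem_convexHull_graph_grid hM hg hy
  · exact subset_convexHull 𝕜 _ (by simpa using hg.1)

theorem corners_subset_grid :
    {v | v ∈ unionPiConvexHull 𝕜 V ∧ ∀ j,
        v j ∈ (convexHull 𝕜 {y | update v j y ∈ unionPiConvexHull 𝕜 V}).extremePoints 𝕜} ⊆
      univ.pi fun j => ⋃ i, V i j := by
  intro v hv j _
  have hvj := hv.2 j
  rw [convexHull_slice_unionPiConvexHull] at hvj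
  exact (extremePoints_convexHull_subset hvj).2

end Graph

theorem multilinear_graph_in_hull_of_corner_points_general
    (k : ℕ) (n : Fin k → ℕ)
    (H : Set ((j : Fin k) → Fin (n j) → ℝ))
    (hH : IsBlockAxisAligned H)
    (M : ((j : Fin k) → (Fin (n j) → ℝ)) → ℝ) (hM : IsBlockMultilinear M) :
    (blockCornerSet H).Finite ∧
    ∀ x ∈ H, (x, M x) ∈
      convexHull ℝ ((fun v : (j : Fin k) → Fin (n j) → ℝ => (v, M v)) ''
        blockCornerSet H) := by
  obtain ⟨N, V, -, rfl⟩ := hH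
  have hgrid : (univ.pi fun j => ⋃ i, (V i j : Set (Fin (n j) → ℝ))).Finite :=
    Finite.pi fun j => finite_iUnion fun i => (V i j).finite_toSet
  refine ⟨hgrid.subset corners_subset_grid, fun x hx => ?_⟩
  have hx' := graph_mem_convexHull_graph_grid hM hx
  rw [← ((hgrid.inter_of_right _).image _).convexHull_extremePoints_convexHull] at hx'
  exact convexHull_mono (extremePoints_convexHull_graph_grid_subset hM) hx'

/-- Every point of the graph of a multilinear function over a nonempty axis-aligned region
`H` lies in the convex hull of the finite set of graph points over the corner points of `H`. -/
theorem multilinear_graph_in_hull_of_corner_points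
    (k : ℕ) (hk : 0 < k) (n : Fin k → ℕ) (hn : ∀ j, 0 < n j)
    (H : Set ((j : Fin k) → Fin (n j) → ℝ)) (hne : H.Nonempty)
    (hH : IsBlockAxisAligned H)
    (M : ((j : Fin k) → (Fin (n j) → ℝ)) → ℝ) (hM : IsBlockMultilinear M) :
    (blockCornerSet H).Finite ∧
    ∀ x ∈ H, (x, M x) ∈
      convexHull ℝ ((fun v : (j : Fin k) → Fin (n j) → ℝ => (v, M v)) ''
        blockCornerSet H) :=
  multilinear_graph_in_hull_of_corner_points_general k n H hH M hM
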